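/- Let S, T, n be positive integers with n ≥ 1 and T ≤ S, and let ε = 1/(2^n · (n+1+S)^2). Then for no integer B with 1 < B < T+1 and no p ∈ [0,1] can both B·(p + ε·(1-p)) ≥ 1 and B·(p + ε·(1-p)) ≥ (T+1)·p hold simultaneously. -/
import Mathlib


theorem stmt_3 (S T n : ℕ) (hS : 1 ≤ S) (hT : 1 ≤ T) (hn : 1 ≤ n) (hTS : T ≤ S)
    (ε : ℝ) (hε : ε = 1 / (2 ^ n * (n + 1 + S) ^ 2)) :
    ¬ ∃ (B : ℤ) (p : ℝ), 1 < B ∧ B < T + 1 ∧ 0 ≤ p ∧ p ≤ 1 ∧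
      (B : ℝ) * (p + ε * (1 - p)) ≥ 1 ∧
      (B : ℝ) * (p + ε * (1 - p)) ≥ (T + 1) * p := by
  rintro ⟨B, p, hB1, hB2, hp0, hp1, h1, h2⟩
  have hBT : (B : ℝ) ≤ T := by exact_mod_cast Int.lt_add_one_iff.mp hB2
  have hB1' : (2 : ℝ) ≤ B := by exact_mod_cast hB1
  have hTS' : (T : ℝ) ≤ S := by exact_mod_cast hTS
  have hS' : (1 : ℝ) ≤ S := by exact_mod_cast hS
  have hn' : (1 : ℝ) ≤ n := by exact_mod_cast hn
  have h2n : (2 : ℝ) ≤ 2 ^ n := by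
    calc (2:ℝ) = 2 ^ 1 := by ring
    _ ≤ 2 ^ n := pow_le_pow_right₀ one_le_two hn
  have hsq : ((S:ℝ) + 2) ^ 2 ≤ ((n:ℝ) + 1 + S) ^ 2 := by nlinarith
  have hpos : (0:ℝ) < 2 ^ n * ((n:ℝ) + 1 + S) ^ 2 := by positivity
  have hεpos : 0 < ε := by rw [hε]; positivity
  have hεb : ε * (2 * ((S:ℝ) + 2) ^ 2) ≤ 1 := by
    rw [hε, div_mul_eq_mul_div, one_mul, div_le_one hpos]
    nlinarith
  have hpT : p ≤ (T:ℝ) * ε := by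
    nlinarith [mul_le_mul_of_nonneg_right hBT hp0,
      mul_le_mul_of_nonneg_right hBT (mul_nonneg hεpos.le (sub_nonneg.mpr hp1)),
      mul_nonneg (mul_nonneg (by positivity : (0:ℝ) ≤ (T:ℝ)) hεpos.le) hp0]
  nlinarith [mul_nonneg hεpos.le (sub_nonneg.mpr hp1), mul_nonneg hp0 hεpos.le,
    mul_le_mul_of_nonneg_right hTS' hεpos.le]
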